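/- arXiv:1810.05607 — 5 statements merged into one kernel-verified Lean document; each statement's English description precedes it below -/
import Mathlib

section
/- Fix reals α, β with 0 ≤ α < 1 and β > 1, and fix N ∈ ℕ. If w and v are words in the language 𝓛 of Σ with k₁(w) = k₁(v) = N, k₂(w) ≤ N and k₂(v) ≤ N, then k₂(w) = k₂(v); that is, there is only one vertex of the form [N, j] with j ≤ N. -/
noncomputable section

namespace IntermediateBeta

/-- The intermediate beta transformation `x ↦ βx + α mod 1`. -/
def F (α β : ℝ) (x : ℝ) : ℝ := Int.fract (β * x + α)

/-- The digit sequence of a point: `Om α β x n` is the index `i` with `F^[n] x ∈ J_i`.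
For `y ∈ [0,1)` we have `y ∈ J_i ↔ ⌊β y + α⌋ = i`. -/
def Om (α β : ℝ) (x : ℝ) : ℕ → ℕ := fun n => (⌊β * ((F α β)^[n] x) + α⌋).toNat

/-- `ℓ = ⌈α + β⌉ - 1`. -/
def ell (α β : ℝ) : ℕ := ⌈α + β⌉₊ - 1

/-- The subshift `Σ`: closure (in the product topology) of the set of digit sequences
of points of `[0,1)`. -/
def Sig (α β : ℝ) : Set (ℕ → ℕ) := closure (Om α β '' Set.Ico (0 : ℝ) 1)

/-- The shift map. -/
def shift (x : ℕ → ℕ) : ℕ → ℕ := fun n => x (n + 1)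

/-- Lexicographic order on one-sided sequences. -/
def lexLe (x y : ℕ → ℕ) : Prop := x = y ∨ ∃ k, (∀ i < k, x i = y i) ∧ x k < y k

/-- The language of a subset `S` of the full shift: the finite words occurring as
initial segments of elements of `S`. -/
def langOf (S : Set (ℕ → ℕ)) (w : List ℕ) : Prop :=
  ∃ x ∈ S, ∀ i : Fin w.length, x i = w.get i

/-- Membership in the language `𝓛` of the subshift `Σ`. -/
def inLang (α β : ℝ) (w : List ℕ) : Prop := langOf (Sig α β) w

/-- The tail segment of `w` of length `k` agrees with the initial segment of `s`
of length `k`. -/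
def tailAgrees (s : ℕ → ℕ) (w : List ℕ) (k : ℕ) : Prop :=
  k ≤ w.length ∧ ∀ i < k, w.getD (w.length - k + i) 0 = s i

/-- `kmax s w` is the length of the longest tail segment of `w` agreeing with an
initial segment of `s` (`k₁(w)` when `s = a`, `k₂(w)` when `s = b`). -/
def kmax (s : ℕ → ℕ) (w : List ℕ) : ℕ := sSup {k | tailAgrees s w k}

/-- `D a b` is the set of lengths `n` such that the initial segment of `b` of
length `n` occurs somewhere in `a`.  Thus `D a b` is the set `𝖣(a)` of the paper
and `D b a` is `𝖣(b)`. -/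
def D (a b : ℕ → ℕ) : Set ℕ := {n | ∃ j, ∀ i < n, b i = a (j + i)}

/-- Gluing of the words `w 0, v 0, w 1, v 1, …, v (n-1), w n`. -/
def glue {n : ℕ} (w : Fin (n + 1) → List ℕ) (v : Fin n → List ℕ) : List ℕ :=
  (List.ofFn fun i : Fin n => w i.castSucc ++ v i).flatten ++ w (Fin.last n)

/-- A collection `G` of words inside the language `lang` has specification: there
is `τ ∈ ℕ` such that any finite list of words of `G` can be glued, with gluing
words from `lang` of length `τ`, into a word of `lang`. -/
def HasSpec (lang G : List ℕ → Prop) : Prop :=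
  ∃ τ : ℕ, 1 ≤ τ ∧ ∀ n : ℕ, ∀ w : Fin (n + 1) → List ℕ, (∀ i, G (w i)) →
    ∃ v : Fin n → List ℕ, (∀ i, (v i).length = τ ∧ lang (v i)) ∧ lang (glue w v)

/-- The initial segment of a sequence, as a finite word. -/
def pre (s : ℕ → ℕ) (n : ℕ) : List ℕ := List.ofFn fun i : Fin n => s i

/-- Lexicographic order for finite words (of equal length). -/
def wordLe (u v : List ℕ) : Prop :=
  u = v ∨ ∃ k, (∀ i < k, u.getD i 0 = v.getD i 0) ∧ u.getD k 0 < v.getD k 0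

/-- Concatenation of a finite word with an infinite sequence. -/
def wcat (w : List ℕ) (x : ℕ → ℕ) : ℕ → ℕ := fun n =>
  if h : n < w.length then w.get ⟨n, h⟩ else x (n - w.length)

/- Once the last `N` letters of a word are known to be `a₁ ⋯ a_N`, whether its last `k ≤ N`
letters are `b₁ ⋯ b_k` is a property of `a` and `b` alone. Hence the largest such `k`, when it
is at most `N`, is the same for all words with `k₁ = N`. -/

section kmax

variable {s t : ℕ → ℕ} {u u' : List ℕ} {k N : ℕ}

theorem tailAgrees_zero (s : ℕ → ℕ) (u : List ℕ) : tailAgrees s u 0 :=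
  ⟨Nat.zero_le _, fun _ hi => absurd hi (Nat.not_lt_zero _)⟩

theorem bddAbove_tailAgrees (s : ℕ → ℕ) (u : List ℕ) : BddAbove {k | tailAgrees s u k} :=
  ⟨u.length, fun _ hk => hk.1⟩

theorem tailAgrees_kmax (s : ℕ → ℕ) (u : List ℕ) : tailAgrees s u (kmax s u) :=
  Nat.sSup_mem ⟨0, tailAgrees_zero s u⟩ (bddAbove_tailAgrees s u)

theorem le_kmax (h : tailAgrees s u k) : k ≤ kmax s u :=
  le_csSup (bddAbove_tailAgrees s u) h

theorem tailAgrees_iff_of_tailAgrees (hu : tailAgrees s u N) (hk : k ≤ N) :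
    tailAgrees t u k ↔ ∀ i < k, s (N - k + i) = t i := by
  have hletter : ∀ i < k, u.getD (u.length - k + i) 0 = s (N - k + i) := fun i hi => by
    rw [← hu.2 (N - k + i) (by omega)]
    congr 1
    have := hu.1
    omega
  refine ⟨fun ht i hi => (hletter i hi).symm.trans (ht.2 i hi),
    fun hst => ⟨hk.trans hu.1, fun i hi => (hletter i hi).trans (hst i hi)⟩⟩

theorem kmax_le_kmax_of_tailAgrees (hu : tailAgrees s u N) (hu' : tailAgrees s u' N)
    (hN : kmax t u ≤ N) : kmax t u ≤ kmax t u' :=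
  le_kmax <| (tailAgrees_iff_of_tailAgrees hu' hN).2 <|
    (tailAgrees_iff_of_tailAgrees hu hN).1 (tailAgrees_kmax t u)

end kmax

theorem unique_vertex_with_first_coord_general (α β : ℝ) (b : ℕ → ℕ)
    (N : ℕ) (w v : List ℕ)
    (hw1 : kmax (Om α β 0) w = N) (hv1 : kmax (Om α β 0) v = N)
    (hw2 : kmax b w ≤ N) (hv2 : kmax b v ≤ N) :
    kmax b w = kmax b v := by
  have hwN : tailAgrees (Om α β 0) w N := hw1 ▸ tailAgrees_kmax _ w
  have hvN : tailAgrees (Om α β 0) v N := hv1 ▸ tailAgrees_kmax _ v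
  exact le_antisymm (kmax_le_kmax_of_tailAgrees hwN hvN hw2)
    (kmax_le_kmax_of_tailAgrees hvN hwN hv2)

/-- **Unique vertex `[N, j]` with `j ≤ N`.** For `0 ≤ α < 1`, `β > 1` and `N ∈ ℕ`:
if `w, v ∈ 𝓛` satisfy `k₁(w) = k₁(v) = N` and `k₂(w) ≤ N`, `k₂(v) ≤ N`, then
`k₂(w) = k₂(v)`. -/
theorem unique_vertex_with_first_coord (α β : ℝ) (hα0 : 0 ≤ α) (hα1 : α < 1)
    (hβ : 1 < β) (b : ℕ → ℕ) (hb : b ∈ Sig α β) (hbsup : ∀ y ∈ Sig α β, lexLe y b)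
    (N : ℕ) (w v : List ℕ) (hw : inLang α β w) (hv : inLang α β v)
    (hw1 : kmax (Om α β 0) w = N) (hv1 : kmax (Om α β 0) v = N)
    (hw2 : kmax b w ≤ N) (hv2 : kmax b v ≤ N) :
    kmax b w = kmax b v :=
  unique_vertex_with_first_coord_general α β b N w v hw1 hv1 hw2 hv2

end IntermediateBeta
end
end

section
/- Fix reals α, β with 0 ≤ α < 1 and β > 2, and let F : [0,1) → [0,1) be F(x) = βx + α − ⌊βx + α⌋. For every nondegenerate interval I ⊆ [0,1) there exist τ ∈ ℕ and a subinterval L ⊆ I such that F^τ(L) = [0,1) and the restriction of F^τ to L is continuous. -/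
/-!
Track a subinterval `J ⊆ I` on which `F^n` is a continuous increasing branch onto some
`[a, b)`. Composing with one more `F`, the interval `[βa + α, βb + α)` either contains a full
`[m, m + 1)`, which pulls back to a full branch of `F^(n+1)`, or it meets at most two of these
unit intervals, and the larger of the two pieces yields a branch of `F^(n+1)` whose image is at
least `β/2 > 1` times longer. Images lie in `[0,1)`, so the lengths cannot grow forever.
-/

noncomputable section

namespace IntermediateBeta

open Set

structure IsBranch (f : ℝ → ℝ) (J : Set ℝ) (a b : ℝ) : Prop where
  ordConnected : J.OrdConnected
  monotoneOn : MonotoneOn f J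
  continuousOn : ContinuousOn f J
  image_eq : f '' J = Ico a b

lemma isBranch_id_Ico (a b : ℝ) : IsBranch id (Ico a b) a b :=
  ⟨ordConnected_Ico, monotoneOn_id, continuousOn_id, image_id _⟩

lemma IsBranch.sub_le_of_mapsTo {f : ℝ → ℝ} {J : Set ℝ} {a b u v : ℝ} (h : IsBranch f J a b)
    (hf : MapsTo f J (Ico u v)) (hab : a < b) : b - a ≤ v - u := by
  have hsub : Ico a b ⊆ Ico u v := h.image_eq ▸ hf.image_subset
  obtain ⟨hua, hbv⟩ := (Ico_subset_Ico_iff hab).1 hsub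
  linarith

lemma IsBranch.comp_restrict {f g : ℝ → ℝ} {J : Set ℝ} {a b p q c d : ℝ}
    (hf : IsBranch f J a b) (hap : a ≤ p) (hqb : q ≤ b) (hg : IsBranch g (Ico p q) c d) :
    IsBranch (g ∘ f) (J ∩ f ⁻¹' Ico p q) c d := by
  have hmaps : MapsTo f (J ∩ f ⁻¹' Ico p q) (Ico p q) := fun _ hx => hx.2
  have himage : f '' (J ∩ f ⁻¹' Ico p q) = Ico p q := by
    rw [image_inter_preimage, hf.image_eq, inter_eq_right.2 (Ico_subset_Ico hap hqb)]
  refine ⟨?_, ?_, ?_, ?_⟩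
  · obtain ⟨u, hu, hJu⟩ := ordConnected_Ico.preimage_monotoneOn hf.monotoneOn
    exact hJu ▸ hf.ordConnected.inter hu
  · exact hg.monotoneOn.comp (hf.monotoneOn.mono inter_subset_left) hmaps
  · exact hg.continuousOn.comp (hf.continuousOn.mono inter_subset_left) hmaps
  · rw [image_comp, himage, hg.image_eq]

lemma exists_half_Ico_subset {a b : ℝ} (hab : a ≤ b) (d : ℝ) :
    ∃ p q, a ≤ p ∧ q ≤ b ∧ (b - a) / 2 ≤ q - p ∧ (q ≤ d ∨ d ≤ p) := by
  by_cases h : a + b ≤ 2 * d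
  · exact ⟨a, (a + b) / 2, le_rfl, by linarith, by linarith, Or.inl (by linarith)⟩
  · exact ⟨(a + b) / 2, b, by linarith, le_rfl, by linarith, Or.inr (by linarith)⟩

lemma mapsTo_F (α β : ℝ) (s : Set ℝ) : MapsTo (F α β) s (Ico 0 1) :=
  fun _ _ => ⟨Int.fract_nonneg _, Int.fract_lt_one _⟩

variable {α β : ℝ}

lemma isBranch_F (hβ : 0 < β) {p q : ℝ} (m : ℤ) (hp : m ≤ β * p + α) (hq : β * q + α ≤ m + 1) :
    IsBranch (F α β) (Ico p q) (β * p + (α - m)) (β * q + (α - m)) := by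
  have heq : EqOn (fun t => β * t + (α - m)) (F α β) (Ico p q) := fun t ht => by
    have hfloor : ⌊β * t + α⌋ = m := Int.floor_eq_iff.2
      ⟨by nlinarith [ht.1], by nlinarith [ht.2]⟩
    simp only [F, Int.fract, hfloor]
    ring
  refine ⟨ordConnected_Ico, ?_, ?_, ?_⟩
  · exact ((monotone_id.const_mul hβ.le).add_const _).monotoneOn _ |>.congr heq
  · exact (continuous_const.mul continuous_id |>.add continuous_const).continuousOn.congr heq.symm
  · rw [← heq.image_eq, image_affine_Ico hβ]

lemma exists_isBranch_F (hβ : 0 < β) {a b : ℝ} (hab : a ≤ b) :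
    (∃ p q, a ≤ p ∧ q ≤ b ∧ IsBranch (F α β) (Ico p q) 0 1) ∨
    ∃ p q, a ≤ p ∧ q ≤ b ∧ ∃ c d, IsBranch (F α β) (Ico p q) c d ∧ β * (b - a) / 2 ≤ d - c := by
  set m := ⌊β * a + α⌋
  have hm : (m : ℝ) ≤ β * a + α := Int.floor_le _
  have hm1 : β * a + α < m + 1 := Int.lt_floor_add_one _
  set d := (m + 1 - α) / β
  have hd : β * d + α = m + 1 := by rw [mul_div_cancel₀ _ hβ.ne']; ring
  by_cases hfull : m + 2 ≤ β * b + α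
  · left
    set e := (m + 2 - α) / β
    have he : β * e + α = m + 2 := by rw [mul_div_cancel₀ _ hβ.ne']; ring
    have hbr := isBranch_F (α := α) hβ (m + 1) (p := d) (q := e) (by push_cast; linarith)
      (by push_cast; linarith)
    rw [show β * d + (α - ((m + 1 : ℤ) : ℝ)) = 0 by push_cast; linarith,
      show β * e + (α - ((m + 1 : ℤ) : ℝ)) = 1 by push_cast; linarith] at hbr
    exact ⟨d, e, le_of_mul_le_mul_left (by linarith) hβ, le_of_mul_le_mul_left (by linarith) hβ,
      hbr⟩
  right
  obtain ⟨p, q, hap, hqb, hlen, hside⟩ := exists_half_Ico_subset hab d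
  refine ⟨p, q, hap, hqb, ?_⟩
  rcases hside with hqd | hdp
  · exact ⟨_, _, isBranch_F hβ m (by nlinarith) (by nlinarith), by nlinarith⟩
  · exact ⟨_, _, isBranch_F hβ (m + 1) (by push_cast; nlinarith) (by push_cast; nlinarith),
      by nlinarith⟩

lemma IsBranch.exists_succ (hβ : 0 < β) {n : ℕ} {J : Set ℝ} {a b : ℝ}
    (h : IsBranch ((F α β)^[n]) J a b) (hab : a ≤ b) :
    (∃ J' ⊆ J, IsBranch ((F α β)^[n + 1]) J' 0 1) ∨
    ∃ J' ⊆ J, ∃ c d, IsBranch ((F α β)^[n + 1]) J' c d ∧ β * (b - a) / 2 ≤ d - c := by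
  rw [Function.iterate_succ']
  rcases exists_isBranch_F (α := α) hβ hab with
    ⟨p, q, hap, hqb, hF⟩ | ⟨p, q, hap, hqb, c, d, hF, hlen⟩
  · exact Or.inl ⟨_, inter_subset_left, h.comp_restrict hap hqb hF⟩
  · exact Or.inr ⟨_, inter_subset_left, c, d, h.comp_restrict hap hqb hF, hlen⟩

lemma exists_full_branch_or_long_branch (hβ : 0 < β) {I : Set ℝ} {x y : ℝ} (hxy : x ≤ y)
    (hI : Ico x y ⊆ I) (n : ℕ) :
    (∃ k, ∃ J ⊆ I, IsBranch ((F α β)^[k + 1]) J 0 1) ∨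
    ∃ J ⊆ I, ∃ a b, IsBranch ((F α β)^[n]) J a b ∧ (β / 2) ^ n * (y - x) ≤ b - a := by
  induction n with
  | zero => exact Or.inr ⟨_, hI, x, y, isBranch_id_Ico x y, by simp⟩
  | succ n ih =>
    obtain hfull | ⟨J, hJI, a, b, hbr, hlen⟩ := ih
    · exact Or.inl hfull
    have hab : a ≤ b := by nlinarith [pow_pos (half_pos hβ) n]
    obtain ⟨J', hJ', hfull⟩ | ⟨J', hJ', c, d, hbr', hlen'⟩ := hbr.exists_succ hβ hab
    · exact Or.inl ⟨n, J', hJ'.trans hJI, hfull⟩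
    · refine Or.inr ⟨J', hJ'.trans hJI, c, d, hbr', ?_⟩
      rw [pow_succ]
      nlinarith

theorem exists_full_return_general (α β : ℝ) (hβ : 2 < β)
    (I : Set ℝ) (hI : I ⊆ Set.Ico (0 : ℝ) 1) (hconn : I.OrdConnected)
    (hnd : ∃ x ∈ I, ∃ y ∈ I, x < y) :
    ∃ τ : ℕ, 1 ≤ τ ∧ ∃ L : Set ℝ, L ⊆ I ∧ L.OrdConnected ∧
      (F α β)^[τ] '' L = Set.Ico (0 : ℝ) 1 ∧ ContinuousOn ((F α β)^[τ]) L := by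
  obtain ⟨x, hx, y, hy, hxy⟩ := hnd
  obtain ⟨n, hn⟩ := pow_unbounded_of_one_lt (1 / (y - x)) (by linarith : (1 : ℝ) < β / 2)
  rw [div_lt_iff₀ (sub_pos.2 hxy)] at hn
  obtain ⟨k, L, hLI, hL⟩ | ⟨J, hJI, a, b, hbr, hlen⟩ :=
    exists_full_branch_or_long_branch (α := α) (β := β) (by linarith) hxy.le
      (Ico_subset_Icc_self.trans (hconn.out hx hy)) n
  · exact ⟨k + 1, by omega, L, hLI, hL.ordConnected, hL.image_eq, hL.continuousOn⟩
  · have hmaps : MapsTo ((F α β)^[n]) J (Ico 0 1) :=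
      ((mapsTo_F α β _).iterate n).mono_left (hJI.trans hI)
    linarith [hbr.sub_le_of_mapsTo hmaps (by linarith)]

/-- **Proposition (full returns).** For `0 ≤ α < 1` and `β > 2`: for every
nondegenerate interval `I ⊆ [0,1)` there are `τ ∈ ℕ` and a subinterval `L ⊆ I`
such that `F^τ(L) = [0,1)` and `F^τ` restricted to `L` is continuous. -/
theorem exists_full_return (α β : ℝ) (hα0 : 0 ≤ α) (hα1 : α < 1) (hβ : 2 < β)
    (I : Set ℝ) (hI : I ⊆ Set.Ico (0 : ℝ) 1) (hconn : I.OrdConnected)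
    (hnd : ∃ x ∈ I, ∃ y ∈ I, x < y) :
    ∃ τ : ℕ, 1 ≤ τ ∧ ∃ L : Set ℝ, L ⊆ I ∧ L.OrdConnected ∧
      (F α β)^[τ] '' L = Set.Ico (0 : ℝ) 1 ∧ ContinuousOn ((F α β)^[τ]) L :=
  exists_full_return_general α β hβ I hI hconn hnd

end IntermediateBeta
end
end

section
/- Fix reals α, β with 0 ≤ α < 1 and β > 2. For every word w in the language 𝓛 of Σ there exists a word u ∈ 𝓛 such that for every x ∈ Σ the concatenated sequence w u x belongs to Σ. -/
noncomputable section

namespace IntermediateBeta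

/-!
Work on the interval side. For a word `w` let `follower α β w` be the image under `F^|w|` of the
points of `[0,1)` whose digit sequence starts with `w`. If `[a, b)` lies in it, then the part of
`[a, b)` with next digit `s` is mapped by `y ↦ βy + α - s` into `follower α β (w ++ [s])`. An
interval meets at most two consecutive digit cells unless it contains a whole cell, so one of its
pieces has an image of length at least `min 1 (β (b - a) / 2)`. Since `β > 2`, after finitely
many steps some extension `w ++ u` has `[0,1) ⊆ follower α β (w ++ u)`: every `y ∈ [0,1)` is
`F^|wu| z` for a `z` whose digits start with `wu`, so `wu Ω(y) = Ω(z)`, and the closure gives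
`wux ∈ Σ` for all `x ∈ Σ`.
-/

open Set

variable {α β : ℝ}

lemma pre_succ (s : ℕ → ℕ) (n : ℕ) : pre s (n + 1) = pre s n ++ [s n] := by
  rw [pre, pre, List.ofFn_succ', List.concat_eq_append]
  rfl

lemma pre_add (s : ℕ → ℕ) (m n : ℕ) :
    pre s (m + n) = pre s m ++ pre (fun i => s (m + i)) n := by
  simp [pre, List.ofFn_add]

lemma pre_length_eq_iff {s : ℕ → ℕ} {w : List ℕ} :
    pre s w.length = w ↔ ∀ i : Fin w.length, s i = w.get i := by
  conv_lhs => rw [pre]; rhs; rw [← List.ofFn_get w]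
  rw [List.ofFn_inj, funext_iff]

lemma Om_apply (z : ℝ) (n : ℕ) : Om α β z n = ⌊β * (F α β)^[n] z + α⌋₊ :=
  Int.floor_toNat _

lemma Om_iterate (z : ℝ) (m : ℕ) :
    Om α β ((F α β)^[m] z) = fun n => Om α β z (m + n) := by
  funext n
  simp only [Om, ← Function.iterate_add_apply, Nat.add_comm]

lemma F_mem_Ico (y : ℝ) : F α β y ∈ Ico 0 1 :=
  ⟨Int.fract_nonneg _, Int.fract_lt_one _⟩

lemma iterate_F_mem_Ico {z : ℝ} (hz : z ∈ Ico 0 1) : ∀ n, (F α β)^[n] z ∈ Ico 0 1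
  | 0 => hz
  | n + 1 => by rw [Function.iterate_succ_apply']; exact F_mem_Ico _

lemma F_eq_sub_floor {y : ℝ} (hy : 0 ≤ β * y + α) :
    F α β y = β * y + α - ⌊β * y + α⌋₊ := by
  rw [F, ← Int.self_sub_floor, natCast_floor_eq_intCast_floor hy]

def cylinder (α β : ℝ) (w : List ℕ) : Set ℝ :=
  {z | z ∈ Ico 0 1 ∧ pre (Om α β z) w.length = w}

def follower (α β : ℝ) (w : List ℕ) : Set ℝ :=
  (F α β)^[w.length] '' cylinder α β w

lemma follower_nil : follower α β [] = Ico 0 1 := by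
  ext y
  exact ⟨fun ⟨_, hz, hzy⟩ => hzy ▸ hz.1, fun hy => ⟨y, ⟨hy, rfl⟩, rfl⟩⟩

lemma follower_subset_Ico (w : List ℕ) : follower α β w ⊆ Ico 0 1 := by
  rintro _ ⟨z, hz, rfl⟩
  exact iterate_F_mem_Ico hz.1 _

lemma Ico_subset_follower_append (hβ : 0 < β) {a b : ℝ} {w : List ℕ}
    (h : Ico a b ⊆ follower α β w) (s : ℕ) :
    Ico (max (β * a + α - s) 0) (min (β * b + α - s) 1) ⊆ follower α β (w ++ [s]) := by
  rintro y' ⟨hy'a, hy'b⟩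
  rw [max_le_iff] at hy'a
  rw [lt_min_iff] at hy'b
  have hy : β * ((y' + s - α) / β) + α = y' + s := by field_simp; ring
  obtain ⟨z, ⟨hz, hzw⟩, hzy⟩ := h (show (y' + s - α) / β ∈ Ico a b from
    ⟨by rw [le_div_iff₀ hβ]; linarith, by rw [div_lt_iff₀ hβ]; linarith⟩)
  refine ⟨z, ⟨hz, ?_⟩, ?_⟩
  · rw [List.length_append, List.length_singleton, pre_succ, hzw, Om_apply, hzy, hy,
      Nat.floor_add_natCast hy'a.2, Nat.floor_eq_zero.2 hy'b.2, zero_add]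
  · rw [List.length_append, List.length_singleton, Function.iterate_succ_apply', hzy, F, hy,
      Int.fract_add_natCast, Int.fract_eq_self.2 ⟨hy'a.2, hy'b.2⟩]

lemma exists_Ico_subset_follower_pre (hα : 0 ≤ α) (hβ : 0 < β) {z : ℝ}
    (hz : z ∈ Ico 0 1) :
    ∀ n, ∃ a b, (F α β)^[n] z ∈ Ico a b ∧ Ico a b ⊆ follower α β (pre (Om α β z) n)
  | 0 => ⟨0, 1, hz, follower_nil.ge⟩
  | n + 1 => by
    obtain ⟨a, b, ⟨hay, hyb⟩, h⟩ := exists_Ico_subset_follower_pre hα hβ hz n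
    have hy := iterate_F_mem_Ico (α := α) (β := β) hz n
    have hFy := F_eq_sub_floor (α := α) (β := β) (y := (F α β)^[n] z) (by nlinarith [hy.1])
    refine ⟨_, _, ?_, pre_succ _ n ▸ Ico_subset_follower_append hβ h (Om α β z n)⟩
    rw [Function.iterate_succ_apply', Om_apply]
    refine ⟨max_le ?_ (F_mem_Ico _).1, lt_min ?_ (F_mem_Ico _).2⟩ <;> rw [hFy] <;> nlinarith

/-- If `c, d` are the images of `a, b` under `y ↦ βy + α - s` with `s` the digit of `a`, the two
terms of the `max` are the lengths of the images of the pieces of `[a, b)` with digits `s` and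
`s + 1`. -/
lemma min_one_half_le_max_of_le {c d : ℝ} (hcd : c ≤ d) :
    min 1 ((d - c) / 2) ≤ max (min d 1 - c) (min (d - 1) 1) := by
  rcases le_total d 1 with hd1 | hd1
  · exact le_max_of_le_left (by rw [min_eq_left hd1]; exact min_le_of_right_le (by linarith))
  rcases le_total d 2 with hd2 | hd2
  · rw [min_eq_right hd1, min_eq_left (by linarith : d - 1 ≤ 1)]
    refine min_le_of_right_le ?_
    rcases le_total (1 - c) (d - 1) with h | h
    · exact le_max_of_le_right (by linarith)
    · exact le_max_of_le_left (by linarith)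
  · rw [min_eq_right (by linarith : (1 : ℝ) ≤ d - 1)]
    exact le_max_of_le_right (min_le_left _ _)

lemma exists_longer_Ico_subset_follower (hα : 0 ≤ α) (hβ : 0 < β) {a b : ℝ} {w : List ℕ}
    (hab : a < b) (h : Ico a b ⊆ follower α β w) :
    ∃ s a' b', min 1 (β * (b - a) / 2) ≤ b' - a' ∧
      Ico a' b' ⊆ follower α β (w ++ [s]) := by
  have ha : 0 ≤ a := ((Ico_subset_Ico_iff hab).1 (h.trans (follower_subset_Ico w))).1
  set s := ⌊β * a + α⌋₊
  have hs : (s : ℝ) ≤ β * a + α ∧ β * a + α < s + 1 :=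
    (Nat.floor_eq_iff (by positivity)).1 rfl
  have key :=
    min_one_half_le_max_of_le (c := β * a + α - s) (d := β * b + α - s) (by nlinarith)
  rw [show β * b + α - s - (β * a + α - s) = β * (b - a) by ring] at key
  rcases le_max_iff.1 key with hleft | hright
  · refine ⟨s, _, _, ?_, Ico_subset_follower_append hβ h s⟩
    rwa [max_eq_left (by linarith)]
  · refine ⟨s + 1, _, _, ?_, Ico_subset_follower_append hβ h (s + 1)⟩
    rwa [max_eq_right (by push_cast; linarith), sub_zero, Nat.cast_add_one, ← sub_sub]

lemma exists_append_Ico_subset_follower (hα : 0 ≤ α) (hβ : 2 ≤ β) (k : ℕ) {a b : ℝ}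
    {w : List ℕ} (hk : 1 ≤ (β / 2) ^ k * (b - a)) (h : Ico a b ⊆ follower α β w) :
    ∃ u, Ico 0 1 ⊆ follower α β (w ++ u) := by
  have hab : a < b := by
    by_contra! hba
    nlinarith [pow_pos (by linarith : (0 : ℝ) < β / 2) k]
  induction k generalizing a b w with
  | zero =>
    obtain ⟨ha, hb⟩ := (Ico_subset_Ico_iff hab).1 (h.trans (follower_subset_Ico w))
    rw [pow_zero, one_mul] at hk
    obtain rfl : a = 0 := by linarith
    obtain rfl : b = 1 := by linarith
    exact ⟨[], by rwa [List.append_nil]⟩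
  | succ k ih =>
    obtain ⟨s, a', b', hlen, h'⟩ := exists_longer_Ico_subset_follower hα (by linarith) hab h
    have hk' : 1 ≤ (β / 2) ^ k * (b' - a') := calc
      1 ≤ min ((β / 2) ^ k) ((β / 2) ^ k * (β * (b - a) / 2)) :=
        le_min (one_le_pow₀ (by linarith)) (by rw [pow_succ] at hk; linarith)
      _ = (β / 2) ^ k * min 1 (β * (b - a) / 2) := by
        rw [mul_min_of_nonneg _ _ (by positivity), mul_one]
      _ ≤ (β / 2) ^ k * (b' - a') := by gcongr
    obtain ⟨u, hu⟩ := ih hk' h' (by nlinarith [pow_pos (by linarith : (0 : ℝ) < β / 2) k])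
    exact ⟨s :: u, by rwa [List.append_assoc, List.singleton_append] at hu⟩

lemma exists_mem_cylinder_of_inLang {w : List ℕ} (hw : inLang α β w) :
    ∃ z, z ∈ cylinder α β w := by
  obtain ⟨x, hx, hxw⟩ := hw
  have hrestrict : Continuous fun (y : ℕ → ℕ) (i : Fin w.length) => y i :=
    continuous_pi fun i => continuous_apply _
  have hopen : IsOpen {y : ℕ → ℕ | pre y w.length = w} :=
    (isOpen_discrete {f : Fin w.length → ℕ | List.ofFn f = w}).preimage hrestrict
  obtain ⟨_, hyw, z, hz, rfl⟩ := mem_closure_iff.1 hx _ hopen (pre_length_eq_iff.2 hxw)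
  exact ⟨z, hz, hyw⟩

lemma inLang_of_mem_cylinder {w : List ℕ} {z : ℝ} (hz : z ∈ cylinder α β w) :
    inLang α β w :=
  ⟨Om α β z, subset_closure ⟨z, hz.1, rfl⟩, pre_length_eq_iff.1 hz.2⟩

lemma iterate_mem_cylinder_of_append {w u : List ℕ} {z : ℝ}
    (hz : z ∈ cylinder α β (w ++ u)) :
    (F α β)^[w.length] z ∈ cylinder α β u := by
  refine ⟨iterate_F_mem_Ico hz.1 _, ?_⟩
  have hwu := hz.2
  rw [List.length_append, pre_add] at hwu
  rw [Om_iterate]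
  exact (List.append_inj hwu (by simp [pre])).2

lemma continuous_wcat (v : List ℕ) : Continuous (wcat v) := by
  refine continuous_pi fun n => ?_
  by_cases hn : n < v.length
  · simp only [wcat, hn, dif_pos]
    exact continuous_const
  · simp only [wcat, hn, dif_neg, not_false_eq_true]
    exact continuous_apply _

lemma wcat_Om_iterate {v : List ℕ} {z : ℝ} (hz : z ∈ cylinder α β v) :
    wcat v (Om α β ((F α β)^[v.length] z)) = Om α β z := by
  funext n
  unfold wcat
  split_ifs with hn
  · exact (pre_length_eq_iff.1 hz.2 ⟨n, hn⟩).symm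
  · rw [Om_iterate]
    exact congrArg (Om α β z) (Nat.add_sub_cancel' (not_lt.1 hn))

lemma wcat_mem_Sig {v : List ℕ} (hv : Ico 0 1 ⊆ follower α β v) {x : ℕ → ℕ}
    (hx : x ∈ Sig α β) : wcat v x ∈ Sig α β := by
  have himage : wcat v '' (Om α β '' Ico 0 1) ⊆ Om α β '' Ico 0 1 := by
    rintro _ ⟨_, ⟨y, hy, rfl⟩, rfl⟩
    obtain ⟨z, hz, rfl⟩ := hv hy
    exact ⟨z, hz.1, (wcat_Om_iterate hz).symm⟩
  exact closure_mono himage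
    (image_closure_subset_closure_image (continuous_wcat v) ⟨x, hx, rfl⟩)

theorem exists_connecting_word_general (α β : ℝ) (hα0 : 0 ≤ α) (hβ : 2 < β)
    (w : List ℕ) (hw : inLang α β w) :
    ∃ u : List ℕ, inLang α β u ∧ ∀ x ∈ Sig α β, wcat (w ++ u) x ∈ Sig α β := by
  obtain ⟨z, hz⟩ := exists_mem_cylinder_of_inLang hw
  obtain ⟨a, b, hab, hfollow⟩ := exists_Ico_subset_follower_pre hα0 (by linarith) hz.1 w.length
  rw [hz.2] at hfollow
  obtain ⟨k, hk⟩ := pow_unbounded_of_one_lt (1 / (b - a)) (by linarith : (1 : ℝ) < β / 2)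
  have hk' : 1 ≤ (β / 2) ^ k * (b - a) := by
    rw [div_lt_iff₀ (sub_pos.2 (hab.1.trans_lt hab.2))] at hk
    exact hk.le
  obtain ⟨u, hu⟩ := exists_append_Ico_subset_follower hα0 hβ.le k hk' hfollow
  obtain ⟨z', hz', -⟩ := hu ⟨le_rfl, one_pos⟩
  exact ⟨u, inLang_of_mem_cylinder (iterate_mem_cylinder_of_append hz'),
    fun x hx => wcat_mem_Sig hu hx⟩

/-- **Corollary (symbolic full returns).** For `0 ≤ α < 1` and `β > 2`: for every
word `w ∈ 𝓛` there is a word `u ∈ 𝓛` such that `w u x ∈ Σ` for every `x ∈ Σ`. -/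
theorem exists_connecting_word (α β : ℝ) (hα0 : 0 ≤ α) (hα1 : α < 1) (hβ : 2 < β)
    (w : List ℕ) (hw : inLang α β w) :
    ∃ u : List ℕ, inLang α β u ∧ ∀ x ∈ Sig α β, wcat (w ++ u) x ∈ Sig α β :=
  exists_connecting_word_general α β hα0 hβ w hw

end IntermediateBeta
end
end

section
/- Let Σ ⊆ {0,…,p}^ℕ be a subshift containing at least two points whose language 𝓛 has specification, and let φ : Σ → ℝ be a continuous function with the Bowen property. Then for every x ∈ Σ, P(φ, 𝒟) < P(φ, 𝓛), where 𝒟 = {(x_1,…,x_n) : n ∈ ℕ} is the set of initial segments of x. -/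
noncomputable section

namespace Subshift

/-- The shift map on one-sided sequences. -/
def shift (x : ℕ → ℕ) : ℕ → ℕ := fun n => x (n + 1)

/-- `S` is a subshift of the full shift on the alphabet `{0,…,p}`: a nonempty
closed shift-invariant set of sequences taking values in `{0,…,p}`. -/
def IsSubshift (p : ℕ) (S : Set (ℕ → ℕ)) : Prop :=
  S.Nonempty ∧ IsClosed S ∧ (∀ x ∈ S, shift x ∈ S) ∧ ∀ x ∈ S, ∀ n, x n ≤ p

/-- The language of `S`: finite words occurring as initial segments of points of `S`. -/
def lang (S : Set (ℕ → ℕ)) : Set (List ℕ) :=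
  {w | ∃ x ∈ S, ∀ i : Fin w.length, x i = w.get i}

/-- Birkhoff sums `(S_n φ)(x)`. -/
def birkhoff (φ : (ℕ → ℕ) → ℝ) (n : ℕ) (x : ℕ → ℕ) : ℝ :=
  ∑ i ∈ Finset.range n, φ (shift^[i] x)

/-- `φ(w) = sup {(S_{|w|} φ)(x) : x ∈ S, x starts with w}`. -/
def phiSup (S : Set (ℕ → ℕ)) (φ : (ℕ → ℕ) → ℝ) (w : List ℕ) : ℝ :=
  sSup (birkhoff φ w.length '' {x ∈ S | ∀ i : Fin w.length, x i = w.get i})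

/-- The partition sum `Λ_n(φ, ℋ) = Σ_{w ∈ ℋ_n} exp (φ(w))`. -/
def Lam (S : Set (ℕ → ℕ)) (φ : (ℕ → ℕ) → ℝ) (H : Set (List ℕ)) (n : ℕ) : ℝ :=
  ∑' w : {w : List ℕ // w ∈ H ∧ w.length = n}, Real.exp (phiSup S φ w.1)

/-- The topological pressure `P(φ, ℋ) = limsup (1/n) log Λ_n(φ, ℋ)`. -/
def pressure (S : Set (ℕ → ℕ)) (φ : (ℕ → ℕ) → ℝ) (H : Set (List ℕ)) : ℝ :=
  Filter.limsup (fun n : ℕ => Real.log (Lam S φ H n) / n) Filter.atTop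

/-- The Bowen property for a potential `φ`. -/
def Bowen (S : Set (ℕ → ℕ)) (φ : (ℕ → ℕ) → ℝ) : Prop :=
  ∃ V > (0 : ℝ), ∀ n : ℕ, ∀ x ∈ S, ∀ y ∈ S, (∀ i < n, x i = y i) →
    |birkhoff φ n x - birkhoff φ n y| ≤ V

/-- The set `𝒟` of initial segments of a sequence `x`. -/
def initialSegs (x : ℕ → ℕ) : Set (List ℕ) :=
  {w | ∃ n : ℕ, w = List.ofFn fun i : Fin n => x i}

/-- Gluing of the words `w 0, v 0, w 1, v 1, …, v (n-1), w n`. -/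
def glue {n : ℕ} (w : Fin (n + 1) → List ℕ) (v : Fin n → List ℕ) : List ℕ :=
  (List.ofFn fun i : Fin n => w i.castSucc ++ v i).flatten ++ w (Fin.last n)

/-- The language of `S` has specification. -/
def HasSpec (S : Set (ℕ → ℕ)) : Prop :=
  ∃ τ : ℕ, 1 ≤ τ ∧ ∀ n : ℕ, ∀ w : Fin (n + 1) → List ℕ, (∀ i, w i ∈ lang S) →
    ∃ v : Fin n → List ℕ, (∀ i, (v i).length = τ ∧ v i ∈ lang S) ∧ glue w v ∈ lang S

/-!
Let `Λ_n = Λ_n(φ, 𝓛)`, `P = P(φ, 𝓛)`, and `R = 2V + τ sup |φ|`, the cost of gluing two words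
across a specification gap. `log Λ_n` is subadditive, and `log Λ_m + log Λ_n - R ≤
log Λ_{m+τ+n}`, so Fekete's lemma gives `e^{nP} ≤ Λ_n ≤ e^{(n + τ) P + R}`. Consequently the
weight `Z_l(w)` of the words of length `l` extending a word `w` is `exp (φ(w) + (l - |w|) P)` up
to bounded factors. Gluing two distinct words `u₀ ≠ u₁` of length `m` behind `x_1 ⋯ x_j` yields
a competitor of `x_1 ⋯ x_{j+τ+m}` carrying a fixed proportion `ρ` of `Z_l(x_1 ⋯ x_j)`, so the
weight of the cylinders along `x` decays by the factor `e^{-ρ}` every `τ + m` letters. Comparing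
with `Z_{n+τ}(x_1 ⋯ x_n) ≥ e^{φ(x_1 ⋯ x_n) - R}` shows `φ(x_1 ⋯ x_n) ≤ n (P - ρ/(τ+m)) + O(1)`.
-/

end Subshift

theorem Finset.sum_le_sum_of_injOn {ι κ M : Type*} [AddCommMonoid M] [PartialOrder M]
    [IsOrderedAddMonoid M] {s : Finset ι} {t : Finset κ} {f : ι → M} {g : κ → M} (e : ι → κ)
    (he : Set.InjOn e s) (hst : Set.MapsTo e s t) (hfg : ∀ i ∈ s, f i ≤ g (e i))
    (hg : ∀ k ∈ t, 0 ≤ g k) : ∑ i ∈ s, f i ≤ ∑ k ∈ t, g k := by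
  classical
  calc ∑ i ∈ s, f i ≤ ∑ i ∈ s, g (e i) := sum_le_sum hfg
    _ = ∑ k ∈ s.image e, g k := (sum_image he).symm
    _ ≤ ∑ k ∈ t, g k :=
      sum_le_sum_of_subset_of_nonneg (image_subset_iff.2 hst) fun k hk _ => hg k hk

open Filter Topology in
theorem Subadditive.sub_le_mul_lim {u : ℕ → ℝ} (hu : Subadditive u)
    (hbdd : BddBelow (Set.range fun n => u n / n)) {τ : ℕ} {R : ℝ}
    (hgap : ∀ m n, u m + u n - R ≤ u (m + τ + n)) (n : ℕ) :
    u n - R ≤ (n + τ) * hu.lim := by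
  rcases Nat.eq_zero_or_pos (n + τ) with hnτ | hnτ
  · obtain ⟨rfl, rfl⟩ : n = 0 ∧ τ = 0 := by omega
    simpa using hgap 0 0
  -- along `N k = k (n + τ) + n`, the gap inequality gives `u (N k) - R ≥ (k + 1) (u n - R)`
  set N : ℕ → ℕ := fun k => k * (n + τ) + n
  have hiter : ∀ k : ℕ, ((k : ℝ) + 1) * (u n - R) + R ≤ u (N k) := by
    intro k
    induction k with
    | zero => simp [N]
    | succ k ih =>
      have hN : N (k + 1) = N k + τ + n := by simp only [N]; ring
      rw [hN]
      push_cast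
      linarith [hgap (N k) n]
  set t := (u n - R) / (n + τ)
  have hnτ' : (0 : ℝ) < n + τ := by exact_mod_cast hnτ
  have hNtop : Tendsto N atTop atTop :=
    tendsto_atTop_mono (fun k => le_add_right (Nat.le_mul_of_pos_right k hnτ)) tendsto_id
  have hNtop' : Tendsto (fun k => (N k : ℝ)) atTop atTop := tendsto_natCast_atTop_atTop.comp hNtop
  have hlower : Tendsto (fun k => t + (u n - n * t) / N k) atTop (𝓝 t) := by
    simpa using tendsto_const_nhds.add (tendsto_const_nhds.div_atTop hNtop')
  have hle : ∀ᶠ k in atTop, t + (u n - n * t) / N k ≤ u (N k) / N k := by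
    filter_upwards [hNtop'.eventually_gt_atTop 0] with k hk
    rw [le_div_iff₀ hk, add_mul, div_mul_cancel₀ _ hk.ne']
    have hNk : (N k : ℝ) = k * (n + τ) + n := by simp [N]
    have ht : t * (n + τ) = u n - R := div_mul_cancel₀ _ hnτ'.ne'
    rw [hNk]
    linear_combination hiter k + (k : ℝ) * ht
  have := le_of_tendsto_of_tendsto hlower ((hu.tendsto_lim hbdd).comp hNtop) hle
  calc u n - R = (n + τ) * t := (mul_div_cancel₀ _ hnτ'.ne').symm
    _ ≤ (n + τ) * hu.lim := mul_le_mul_of_nonneg_left this hnτ'.le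

theorem bddBelow_range_div_of_mul_le {f : ℕ → ℝ} {c : ℝ} (hc : c ≤ 0) (h : ∀ n : ℕ, n * c ≤ f n) :
    BddBelow (Set.range fun n : ℕ => f n / n) := by
  refine ⟨c, Set.forall_mem_range.2 fun n => ?_⟩
  rcases Nat.eq_zero_or_pos n with rfl | hn
  · simpa using hc
  · exact (le_div_iff₀ (by positivity)).2 (by linarith [h n])

open Filter Topology in
theorem limsup_div_le_of_le_mul_add {f : ℕ → ℝ} {a B : ℝ}
    (hbdd : BddBelow (Set.range fun n : ℕ => f n / n)) (h : ∀ n : ℕ, f n ≤ n * a + B) :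
    limsup (fun n : ℕ => f n / n) atTop ≤ a := by
  obtain ⟨b, hb⟩ := hbdd
  have hcobdd : IsCoboundedUnder (· ≤ ·) atTop fun n : ℕ => f n / n :=
    (isBoundedUnder_of (r := (· ≥ ·)) ⟨b, fun n => hb ⟨n, rfl⟩⟩).isCoboundedUnder_le
  have ht : Tendsto (fun n : ℕ => a + B / n) atTop (𝓝 a) := by
    simpa using tendsto_const_nhds.add (tendsto_const_div_atTop_nhds_zero_nat B)
  refine (limsup_le_limsup ?_ hcobdd ht.isBoundedUnder_le).trans_eq ht.limsup_eq
  filter_upwards [eventually_gt_atTop 0] with n hn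
  rw [div_le_iff₀ (by positivity), add_mul, div_mul_cancel₀ _ (by positivity)]
  linarith [h n]

namespace Subshift

def StartsWith (y : ℕ → ℕ) (w : List ℕ) : Prop := ∀ i : Fin w.length, y i = w.get i

def BowenWith (S : Set (ℕ → ℕ)) (φ : (ℕ → ℕ) → ℝ) (V : ℝ) : Prop :=
  ∀ n : ℕ, ∀ x ∈ S, ∀ y ∈ S, (∀ i < n, x i = y i) → |birkhoff φ n x - birkhoff φ n y| ≤ V

def HasGapSpec (S : Set (ℕ → ℕ)) (τ : ℕ) : Prop :=
  ∀ a ∈ lang S, ∀ b ∈ lang S, ∃ v : List ℕ, v.length = τ ∧ a ++ v ++ b ∈ lang S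

theorem HasSpec.exists_hasGapSpec {S : Set (ℕ → ℕ)} (h : HasSpec S) :
    ∃ τ, 0 < τ ∧ HasGapSpec S τ := by
  obtain ⟨τ, hτ, h⟩ := h
  refine ⟨τ, hτ, fun a ha b hb => ?_⟩
  obtain ⟨v, hv, hg⟩ := h 1 ![a, b] (Fin.forall_fin_two.2 ⟨ha, hb⟩)
  exact ⟨v 0, (hv 0).1, by simpa [glue, List.ofFn_succ, Fin.last] using hg⟩

def initSeg (x : ℕ → ℕ) (n : ℕ) : List ℕ := List.ofFn fun i : Fin n => x i

section Words

variable {p : ℕ} {S : Set (ℕ → ℕ)}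

theorem startsWith_iff {y : ℕ → ℕ} {w : List ℕ} :
    StartsWith y w ↔ ∀ i (h : i < w.length), y i = w[i] :=
  ⟨fun H i h => H ⟨i, h⟩, fun H i => H i i.2⟩

theorem StartsWith.of_prefix {y : ℕ → ℕ} {a w : List ℕ} (h : StartsWith y w) (ha : a <+: w) :
    StartsWith y a := by
  rw [startsWith_iff] at h ⊢
  intro i hi
  rw [h i (hi.trans_le ha.length_le), ha.getElem hi]

theorem shift_iterate_apply (y : ℕ → ℕ) (k n : ℕ) : shift^[k] y n = y (n + k) := by
  induction k generalizing y with
  | zero => rfl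
  | succ k ih => rw [Function.iterate_succ_apply, ih]; exact congrArg y (by omega)

theorem StartsWith.shift_iterate_drop {y : ℕ → ℕ} {w : List ℕ} (h : StartsWith y w) (k : ℕ) :
    StartsWith (shift^[k] y) (w.drop k) := by
  rw [startsWith_iff] at h ⊢
  intro i hi
  rw [List.getElem_drop, shift_iterate_apply, h _ (by simp at hi; omega)]
  simp only [Nat.add_comm k i]

theorem StartsWith.shift_iterate_append {y : ℕ → ℕ} {a b : List ℕ} (h : StartsWith y (a ++ b)) :
    StartsWith (shift^[a.length] y) b := by
  simpa using h.shift_iterate_drop a.length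

theorem IsSubshift.shift_iterate_mem (hS : IsSubshift p S) {y : ℕ → ℕ} (hy : y ∈ S) (k : ℕ) :
    shift^[k] y ∈ S := by
  induction k with
  | zero => exact hy
  | succ k ih => rw [Function.iterate_succ_apply']; exact hS.2.2.1 _ ih

theorem IsSubshift.isCompact (hS : IsSubshift p S) : IsCompact S :=
  (isCompact_univ_pi fun _ => (Set.finite_Iic p).isCompact).of_isClosed_subset hS.2.1
    fun y hy => Set.mem_univ_pi.2 fun i => hS.2.2.2 y hy i

theorem mem_lang_of_prefix {a w : List ℕ} (hw : w ∈ lang S) (ha : a <+: w) : a ∈ lang S :=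
  let ⟨y, hy, h⟩ := hw
  ⟨y, hy, StartsWith.of_prefix h ha⟩

theorem IsSubshift.drop_mem_lang (hS : IsSubshift p S) {w : List ℕ} (hw : w ∈ lang S) (k : ℕ) :
    w.drop k ∈ lang S :=
  let ⟨y, hy, h⟩ := hw
  ⟨shift^[k] y, hS.shift_iterate_mem hy k, StartsWith.shift_iterate_drop h k⟩

theorem IsSubshift.finite_lang_length (hS : IsSubshift p S) (n : ℕ) :
    {w : List ℕ | w ∈ lang S ∧ w.length = n}.Finite := by
  refine ((Set.finite_univ (α := Fin n → Fin (p + 1))).image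
    fun f => List.ofFn fun i => (f i : ℕ)).subset ?_
  rintro w ⟨⟨y, hy, hyw⟩, rfl⟩
  refine ⟨fun i => ⟨w.get i, ?_⟩, trivial, List.ofFn_get w⟩
  exact Nat.lt_succ_of_le (hyw i ▸ hS.2.2.2 y hy i)

@[simp] theorem length_initSeg (x : ℕ → ℕ) (n : ℕ) : (initSeg x n).length = n := by
  simp [initSeg]

theorem startsWith_initSeg (x : ℕ → ℕ) (n : ℕ) : StartsWith x (initSeg x n) := by
  simp [startsWith_iff, initSeg]

theorem initSeg_mem_lang {x : ℕ → ℕ} (hx : x ∈ S) (n : ℕ) : initSeg x n ∈ lang S :=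
  ⟨x, hx, startsWith_initSeg x n⟩

theorem initSeg_prefix_initSeg (x : ℕ → ℕ) {j k : ℕ} (h : j ≤ k) : initSeg x j <+: initSeg x k := by
  rw [List.prefix_iff_eq_take]
  refine List.ext_getElem (by simpa using h) fun i _ _ => ?_
  simp [initSeg]

theorem exists_words_ne_of_ne {x y : ℕ → ℕ} (hx : x ∈ S) (hy : y ∈ S) (hxy : x ≠ y) :
    ∃ u₀ ∈ lang S, ∃ u₁ ∈ lang S, u₀.length = u₁.length ∧ u₀ ≠ u₁ := by
  obtain ⟨d, hd⟩ := Function.ne_iff.1 hxy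
  refine ⟨initSeg x (d + 1), initSeg_mem_lang hx _, initSeg y (d + 1), initSeg_mem_lang hy _,
    by simp, fun h => hd ?_⟩
  simpa using congrFun (List.ofFn_inj.1 h) (Fin.last d)

end Words

section PhiSup

variable {p : ℕ} {S : Set (ℕ → ℕ)} {φ : (ℕ → ℕ) → ℝ} {C V : ℝ} {τ : ℕ}

theorem birkhoff_add (φ : (ℕ → ℕ) → ℝ) (k l : ℕ) (y : ℕ → ℕ) :
    birkhoff φ (k + l) y = birkhoff φ k y + birkhoff φ l (shift^[k] y) := by
  rw [birkhoff, birkhoff, birkhoff, Finset.sum_range_add]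
  simp only [add_comm k, Function.iterate_add_apply]

theorem abs_birkhoff_le (hS : IsSubshift p S) (hC : ∀ z ∈ S, |φ z| ≤ C) {y : ℕ → ℕ}
    (hy : y ∈ S) (n : ℕ) : |birkhoff φ n y| ≤ n * C := by
  calc |birkhoff φ n y| ≤ ∑ i ∈ Finset.range n, |φ (shift^[i] y)| :=
        Finset.abs_sum_le_sum_abs _ _
    _ ≤ ∑ _i ∈ Finset.range n, C :=
        Finset.sum_le_sum fun i _ => hC _ (hS.shift_iterate_mem hy i)
    _ = n * C := by simp

theorem IsSubshift.exists_abs_le (hS : IsSubshift p S) (hφ : ContinuousOn φ S) :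
    ∃ C, ∀ z ∈ S, |φ z| ≤ C :=
  hS.isCompact.exists_bound_of_continuousOn hφ

theorem IsSubshift.nonneg_of_abs_le (hS : IsSubshift p S) (hC : ∀ z ∈ S, |φ z| ≤ C) : 0 ≤ C :=
  let ⟨y, hy⟩ := hS.1
  (abs_nonneg _).trans (hC y hy)

theorem le_phiSup (hS : IsSubshift p S) (hC : ∀ z ∈ S, |φ z| ≤ C) {y : ℕ → ℕ} {w : List ℕ}
    (hy : y ∈ S) (h : StartsWith y w) : birkhoff φ w.length y ≤ phiSup S φ w := by
  refine le_csSup ⟨w.length * C, ?_⟩ ⟨y, ⟨hy, h⟩, rfl⟩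
  rintro _ ⟨z, ⟨hz, -⟩, rfl⟩
  exact (abs_le.1 (abs_birkhoff_le hS hC hz _)).2

theorem phiSup_le (hV : BowenWith S φ V) {y : ℕ → ℕ} {w : List ℕ} (hy : y ∈ S)
    (h : StartsWith y w) : phiSup S φ w ≤ birkhoff φ w.length y + V := by
  refine csSup_le ⟨_, ⟨y, ⟨hy, h⟩, rfl⟩⟩ ?_
  rintro _ ⟨z, ⟨hz, hzw⟩, rfl⟩
  have hzy : ∀ i < w.length, z i = y i := fun i hi => by
    rw [startsWith_iff.1 hzw i hi, startsWith_iff.1 h i hi]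
  linarith [(abs_le.1 (hV w.length z hz y hy hzy)).2]

theorem neg_mul_le_phiSup (hS : IsSubshift p S) (hC : ∀ z ∈ S, |φ z| ≤ C) {w : List ℕ}
    (hw : w ∈ lang S) : -(w.length * C) ≤ phiSup S φ w := by
  obtain ⟨y, hy, h⟩ := hw
  exact (abs_le.1 (abs_birkhoff_le hS hC hy _)).1.trans (le_phiSup hS hC hy h)

theorem phiSup_nil (hS : IsSubshift p S) : phiSup S φ [] = 0 := by
  have h : birkhoff φ ([] : List ℕ).length = fun _ => 0 := funext fun _ => by simp [birkhoff]
  rw [phiSup, h, Set.Nonempty.image_const, csSup_singleton]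
  obtain ⟨y, hy⟩ := hS.1
  exact ⟨y, hy, nofun⟩

theorem phiSup_append_le (hS : IsSubshift p S) (hC : ∀ z ∈ S, |φ z| ≤ C) {a b : List ℕ}
    (hab : a ++ b ∈ lang S) : phiSup S φ (a ++ b) ≤ phiSup S φ a + phiSup S φ b := by
  obtain ⟨y, hy, h⟩ := hab
  refine csSup_le ⟨_, ⟨y, ⟨hy, h⟩, rfl⟩⟩ ?_
  rintro _ ⟨z, ⟨hz, hzab⟩, rfl⟩
  rw [List.length_append, birkhoff_add]
  exact add_le_add (le_phiSup hS hC hz (StartsWith.of_prefix hzab (List.prefix_append a b)))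
    (le_phiSup hS hC (hS.shift_iterate_mem hz _) (StartsWith.shift_iterate_append hzab))

theorem phiSup_add_phiSup_le (hS : IsSubshift p S) (hC : ∀ z ∈ S, |φ z| ≤ C)
    (hV : BowenWith S φ V) {a v b : List ℕ} (hv : v.length = τ) (hg : a ++ v ++ b ∈ lang S) :
    phiSup S φ a + phiSup S φ b - (2 * V + τ * C) ≤ phiSup S φ (a ++ v ++ b) := by
  obtain ⟨y, hy, h : StartsWith y _⟩ := hg
  have ha := phiSup_le hV hy (h.of_prefix ((List.prefix_append a v).trans (List.prefix_append _ b)))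
  have hb := phiSup_le hV (hS.shift_iterate_mem hy _) h.shift_iterate_append
  have hvC := (abs_le.1 (abs_birkhoff_le hS hC (hS.shift_iterate_mem hy a.length) v.length)).1
  have hg := le_phiSup hS hC hy h
  simp only [List.length_append, birkhoff_add, hv] at hg hb hvC
  linarith

end PhiSup

section PartitionSums

variable {p : ℕ} {S : Set (ℕ → ℕ)} {φ : (ℕ → ℕ) → ℝ} {C V : ℝ} {τ : ℕ}

-- the junk value `∅` never occurs for subshifts, see `IsSubshift.mem_words`
open Classical in
def words (S : Set (ℕ → ℕ)) (n : ℕ) : Finset (List ℕ) :=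
  if h : {w : List ℕ | w ∈ lang S ∧ w.length = n}.Finite then h.toFinset else ∅

theorem IsSubshift.mem_words (hS : IsSubshift p S) {n : ℕ} {w : List ℕ} :
    w ∈ words S n ↔ w ∈ lang S ∧ w.length = n := by
  rw [words, dif_pos (hS.finite_lang_length n), Set.Finite.mem_toFinset]
  exact Iff.rfl

theorem IsSubshift.Lam_lang_eq_sum (hS : IsSubshift p S) (n : ℕ) :
    Lam S φ (lang S) n = ∑ w ∈ words S n, Real.exp (phiSup S φ w) := by
  rw [Lam, ← Finset.tsum_subtype]
  exact Equiv.tsum_eq (Equiv.subtypeEquivRight fun w => hS.mem_words.symm)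
    fun w : {w // w ∈ words S n} => Real.exp (phiSup S φ w.1)

theorem IsSubshift.Lam_lang_pos (hS : IsSubshift p S) (n : ℕ) : 0 < Lam S φ (lang S) n := by
  obtain ⟨y, hy⟩ := hS.1
  rw [hS.Lam_lang_eq_sum]
  exact Finset.sum_pos (fun w _ => Real.exp_pos _)
    ⟨initSeg y n, hS.mem_words.2 ⟨initSeg_mem_lang hy n, length_initSeg y n⟩⟩

theorem IsSubshift.Lam_lang_zero (hS : IsSubshift p S) : Lam S φ (lang S) 0 = 1 := by
  obtain ⟨y, hy⟩ := hS.1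
  have h : words S 0 = {[]} := by
    ext w
    rw [hS.mem_words, List.length_eq_zero_iff, Finset.mem_singleton]
    exact ⟨And.right, fun h => ⟨h ▸ ⟨y, hy, nofun⟩, h⟩⟩
  rw [hS.Lam_lang_eq_sum, h, Finset.sum_singleton, phiSup_nil hS, Real.exp_zero]

theorem Lam_initialSegs (x : ℕ → ℕ) (n : ℕ) :
    Lam S φ (initialSegs x) n = Real.exp (phiSup S φ (initSeg x n)) := by
  have huniq : ∀ w : {w : List ℕ // w ∈ initialSegs x ∧ w.length = n}, w.1 = initSeg x n := by
    rintro ⟨_, ⟨k, rfl⟩, hk⟩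
    obtain rfl : k = n := by simpa using hk
    rfl
  rw [Lam, tsum_eq_single ⟨initSeg x n, ⟨n, rfl⟩, length_initSeg x n⟩
    fun w hw => (hw (Subtype.ext (huniq w))).elim]

def cylinderSum (S : Set (ℕ → ℕ)) (φ : (ℕ → ℕ) → ℝ) (l : ℕ) (w : List ℕ) : ℝ :=
  ∑ ω ∈ words S l with w <+: ω, Real.exp (phiSup S φ ω)

theorem cylinderSum_nonneg (l : ℕ) (w : List ℕ) : 0 ≤ cylinderSum S φ l w :=
  Finset.sum_nonneg fun _ _ => (Real.exp_pos _).le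

theorem IsSubshift.cylinderSum_le_Lam (hS : IsSubshift p S) (l : ℕ) (w : List ℕ) :
    cylinderSum S φ l w ≤ Lam S φ (lang S) l := by
  rw [hS.Lam_lang_eq_sum]
  exact Finset.sum_le_sum_of_subset_of_nonneg (Finset.filter_subset _ _)
    fun _ _ _ => (Real.exp_pos _).le

theorem cylinderSum_anti (l : ℕ) {w w' : List ℕ} (h : w <+: w') :
    cylinderSum S φ l w' ≤ cylinderSum S φ l w :=
  Finset.sum_le_sum_of_subset_of_nonneg (Finset.monotone_filter_right _ fun _ _ => h.trans)
    fun _ _ _ => (Real.exp_pos _).le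

theorem cylinderSum_add_le (l : ℕ) {w w₁ w₂ : List ℕ} (h₁ : w <+: w₁) (h₂ : w <+: w₂)
    (hlen : w₁.length = w₂.length) (hne : w₁ ≠ w₂) :
    cylinderSum S φ l w₁ + cylinderSum S φ l w₂ ≤ cylinderSum S φ l w := by
  classical
  have hdisj : Disjoint ((words S l).filter (w₁ <+: ·)) ((words S l).filter (w₂ <+: ·)) := by
    refine Finset.disjoint_filter.2 fun ω _ hω₁ hω₂ => hne ?_
    rcases List.prefix_or_prefix_of_prefix hω₁ hω₂ with h | h
    exacts [h.eq_of_length hlen, (h.eq_of_length hlen.symm).symm]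
  rw [cylinderSum, cylinderSum, ← Finset.sum_union hdisj, ← Finset.filter_or]
  exact Finset.sum_le_sum_of_subset_of_nonneg
    (Finset.monotone_filter_right _ fun _ _ h => h.elim h₁.trans h₂.trans)
    fun _ _ _ => (Real.exp_pos _).le

theorem IsSubshift.Lam_add_eq_sum (hS : IsSubshift p S) (n l : ℕ) :
    Lam S φ (lang S) (n + l) = ∑ a ∈ words S n, cylinderSum S φ (n + l) a := by
  classical
  have hmaps : ∀ ω ∈ words S (n + l), ω.take n ∈ words S n := fun ω hω => by
    obtain ⟨hωS, hωl⟩ := hS.mem_words.1 hω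
    exact hS.mem_words.2 ⟨mem_lang_of_prefix hωS (List.take_prefix n ω), by simp [hωl]⟩
  rw [hS.Lam_lang_eq_sum, ← Finset.sum_fiberwise_of_maps_to hmaps]
  refine Finset.sum_congr rfl fun a ha => Finset.sum_congr (Finset.filter_congr fun ω _ => ?_) ?_
  · rw [List.prefix_iff_eq_take, (hS.mem_words.1 ha).2, eq_comm]
  · exact fun _ _ => rfl

theorem cylinderSum_le (hS : IsSubshift p S) (hC : ∀ z ∈ S, |φ z| ≤ C) (w : List ℕ) (l : ℕ) :
    cylinderSum S φ (w.length + l) w ≤ Real.exp (phiSup S φ w) * Lam S φ (lang S) l := by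
  rw [hS.Lam_lang_eq_sum, Finset.mul_sum]
  refine Finset.sum_le_sum_of_injOn (fun ω => ω.drop w.length) ?_ ?_ ?_
    fun _ _ => by positivity
  · intro ω hω ω' hω' h
    obtain ⟨t, rfl⟩ := (Finset.mem_filter.1 hω).2
    obtain ⟨t', rfl⟩ := (Finset.mem_filter.1 hω').2
    simp_all
  · intro ω hω
    obtain ⟨hωl, t, rfl⟩ := Finset.mem_filter.1 hω
    obtain ⟨hωS, hlen⟩ := hS.mem_words.1 hωl
    exact hS.mem_words.2 ⟨hS.drop_mem_lang hωS _, by simpa using hlen⟩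
  · intro ω hω
    obtain ⟨hωl, t, rfl⟩ := Finset.mem_filter.1 hω
    rw [List.drop_left, ← Real.exp_add, Real.exp_le_exp]
    exact phiSup_append_le hS hC (hS.mem_words.1 hωl).1

theorem le_cylinderSum (hS : IsSubshift p S) (hC : ∀ z ∈ S, |φ z| ≤ C) (hV : BowenWith S φ V)
    (hsp : HasGapSpec S τ) {w : List ℕ} (hw : w ∈ lang S) (l : ℕ) :
    Real.exp (phiSup S φ w - (2 * V + τ * C)) * Lam S φ (lang S) l ≤
      cylinderSum S φ (w.length + τ + l) w := by
  choose! v hv using hsp w hw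
  rw [hS.Lam_lang_eq_sum, Finset.mul_sum]
  refine Finset.sum_le_sum_of_injOn (fun b => w ++ v b ++ b) ?_ ?_ ?_
    fun _ _ => by positivity
  · intro b hb b' hb' h
    exact (List.append_inj' h (by rw [(hS.mem_words.1 hb).2, (hS.mem_words.1 hb').2])).2
  · intro b hb
    obtain ⟨hbS, hlen⟩ := hS.mem_words.1 hb
    refine Finset.mem_filter.2 ⟨hS.mem_words.2 ⟨(hv b hbS).2, ?_⟩, ?_⟩
    · simp only [List.length_append, (hv b hbS).1, hlen]
    · exact (List.prefix_append _ _).trans (List.prefix_append _ _)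
  · intro b hb
    have hbS := (hS.mem_words.1 hb).1
    rw [← Real.exp_add, Real.exp_le_exp]
    linarith [phiSup_add_phiSup_le hS hC hV (hv b hbS).1 (hv b hbS).2]

theorem Lam_add_le_mul (hS : IsSubshift p S) (hC : ∀ z ∈ S, |φ z| ≤ C) (n l : ℕ) :
    Lam S φ (lang S) (n + l) ≤ Lam S φ (lang S) n * Lam S φ (lang S) l := by
  rw [hS.Lam_add_eq_sum, hS.Lam_lang_eq_sum n, Finset.sum_mul]
  refine Finset.sum_le_sum fun a ha => ?_
  simpa only [(hS.mem_words.1 ha).2] using cylinderSum_le hS hC a l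

theorem mul_le_Lam_add (hS : IsSubshift p S) (hC : ∀ z ∈ S, |φ z| ≤ C) (hV : BowenWith S φ V)
    (hsp : HasGapSpec S τ) (n l : ℕ) :
    Real.exp (-(2 * V + τ * C)) * (Lam S φ (lang S) n * Lam S φ (lang S) l) ≤
      Lam S φ (lang S) (n + τ + l) := by
  rw [add_assoc, hS.Lam_add_eq_sum, hS.Lam_lang_eq_sum n, Finset.sum_mul, Finset.mul_sum]
  refine Finset.sum_le_sum fun a ha => ?_
  obtain ⟨haS, rfl⟩ := hS.mem_words.1 ha
  rw [← mul_assoc, ← Real.exp_add, neg_add_eq_sub, ← add_assoc]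
  exact le_cylinderSum hS hC hV hsp haS l

end PartitionSums

section Pressure

variable {p : ℕ} {S : Set (ℕ → ℕ)} {φ : (ℕ → ℕ) → ℝ} {C V : ℝ} {τ : ℕ}

theorem subadditive_log_Lam (hS : IsSubshift p S) (hC : ∀ z ∈ S, |φ z| ≤ C) :
    Subadditive fun n => Real.log (Lam S φ (lang S) n) := fun m n => by
  rw [← Real.log_mul (hS.Lam_lang_pos m).ne' (hS.Lam_lang_pos n).ne']
  exact Real.log_le_log (hS.Lam_lang_pos _) (Lam_add_le_mul hS hC m n)

theorem log_Lam_add_le (hS : IsSubshift p S) (hC : ∀ z ∈ S, |φ z| ≤ C) (hV : BowenWith S φ V)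
    (hsp : HasGapSpec S τ) (m n : ℕ) :
    Real.log (Lam S φ (lang S) m) + Real.log (Lam S φ (lang S) n) - (2 * V + τ * C) ≤
      Real.log (Lam S φ (lang S) (m + τ + n)) := by
  have hm := hS.Lam_lang_pos (φ := φ) m
  have hn := hS.Lam_lang_pos (φ := φ) n
  have h := Real.log_le_log (by positivity) (mul_le_Lam_add hS hC hV hsp m n)
  rw [Real.log_mul (by positivity) (by positivity), Real.log_exp,
    Real.log_mul hm.ne' hn.ne'] at h
  linarith

theorem bddBelow_log_Lam_div (hS : IsSubshift p S) (hC : ∀ z ∈ S, |φ z| ≤ C) :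
    BddBelow (Set.range fun n : ℕ => Real.log (Lam S φ (lang S) n) / n) := by
  obtain ⟨y, hy⟩ := hS.1
  refine bddBelow_range_div_of_mul_le (neg_nonpos.2 (hS.nonneg_of_abs_le hC)) fun n => ?_
  rw [Real.le_log_iff_exp_le (hS.Lam_lang_pos n), hS.Lam_lang_eq_sum]
  have hyn := initSeg_mem_lang hy n
  calc Real.exp (n * -C) ≤ Real.exp (phiSup S φ (initSeg y n)) := by
        simpa [mul_comm] using neg_mul_le_phiSup hS hC hyn
    _ ≤ _ := Finset.single_le_sum (fun _ _ => (Real.exp_pos _).le)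
        (hS.mem_words.2 ⟨hyn, length_initSeg y n⟩)

theorem pressure_lang_eq_lim (hS : IsSubshift p S) (hC : ∀ z ∈ S, |φ z| ≤ C) :
    pressure S φ (lang S) = (subadditive_log_Lam hS hC).lim :=
  ((subadditive_log_Lam hS hC).tendsto_lim (bddBelow_log_Lam_div hS hC)).limsup_eq

theorem exp_mul_pressure_le_Lam (hS : IsSubshift p S) (hC : ∀ z ∈ S, |φ z| ≤ C) (n : ℕ) :
    Real.exp (n * pressure S φ (lang S)) ≤ Lam S φ (lang S) n := by
  rcases Nat.eq_zero_or_pos n with rfl | hn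
  · simp [hS.Lam_lang_zero]
  rw [← Real.le_log_iff_exp_le (hS.Lam_lang_pos n), ← le_div_iff₀' (by positivity),
    pressure_lang_eq_lim hS hC]
  exact (subadditive_log_Lam hS hC).lim_le_div (bddBelow_log_Lam_div hS hC) hn.ne'

theorem Lam_le_exp_pressure (hS : IsSubshift p S) (hC : ∀ z ∈ S, |φ z| ≤ C)
    (hV : BowenWith S φ V) (hsp : HasGapSpec S τ) (n : ℕ) :
    Lam S φ (lang S) n ≤ Real.exp ((n + τ) * pressure S φ (lang S) + (2 * V + τ * C)) := by
  rw [← Real.log_le_iff_le_exp (hS.Lam_lang_pos n), pressure_lang_eq_lim hS hC]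
  linarith [(subadditive_log_Lam hS hC).sub_le_mul_lim (bddBelow_log_Lam_div hS hC)
    (log_Lam_add_le hS hC hV hsp) n]

theorem pressure_initialSegs (x : ℕ → ℕ) :
    pressure S φ (initialSegs x) =
      Filter.limsup (fun n : ℕ => phiSup S φ (initSeg x n) / n) Filter.atTop := by
  simp only [pressure, Lam_initialSegs, Real.log_exp]

end Pressure

section Decay

variable {p : ℕ} {S : Set (ℕ → ℕ)} {φ : (ℕ → ℕ) → ℝ} {C V : ℝ} {τ : ℕ}

theorem cylinderSum_le_exp_pressure (hS : IsSubshift p S) (hC : ∀ z ∈ S, |φ z| ≤ C)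
    (hV : BowenWith S φ V) (hsp : HasGapSpec S τ) (w : List ℕ) (l : ℕ) :
    cylinderSum S φ (w.length + l) w ≤
      Real.exp (phiSup S φ w + ((l + τ : ℕ) * pressure S φ (lang S) + (2 * V + τ * C))) := by
  rw [Real.exp_add]
  refine (cylinderSum_le hS hC w l).trans (mul_le_mul_of_nonneg_left ?_ (Real.exp_pos _).le)
  simpa using Lam_le_exp_pressure hS hC hV hsp l

theorem exp_pressure_le_cylinderSum (hS : IsSubshift p S) (hC : ∀ z ∈ S, |φ z| ≤ C)
    (hV : BowenWith S φ V) (hsp : HasGapSpec S τ) {w : List ℕ} (hw : w ∈ lang S) (l : ℕ) :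
    Real.exp (phiSup S φ w - (2 * V + τ * C) + l * pressure S φ (lang S)) ≤
      cylinderSum S φ (w.length + τ + l) w := by
  rw [Real.exp_add]
  exact (mul_le_mul_of_nonneg_left (exp_mul_pressure_le_Lam hS hC l) (Real.exp_pos _).le).trans
    (le_cylinderSum hS hC hV hsp hw l)

theorem exists_ne_extension (hS : IsSubshift p S) (hC : ∀ z ∈ S, |φ z| ≤ C)
    (hV : BowenWith S φ V) (hsp : HasGapSpec S τ) {u₀ u₁ : List ℕ} (hu₀ : u₀ ∈ lang S)
    (hu₁ : u₁ ∈ lang S) (hlen : u₀.length = u₁.length) (hne : u₀ ≠ u₁) {w : List ℕ}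
    (hw : w ∈ lang S) (z : List ℕ) :
    ∃ g ∈ lang S, g.length = w.length + (τ + u₀.length) ∧ w <+: g ∧ g ≠ z ∧
      phiSup S φ w - (u₀.length * C + (2 * V + τ * C)) ≤ phiSup S φ g := by
  have hext : ∀ u ∈ lang S, u.length = u₀.length → ∃ v : List ℕ, v.length = τ ∧
      w ++ v ++ u ∈ lang S ∧
      phiSup S φ w - (u₀.length * C + (2 * V + τ * C)) ≤ phiSup S φ (w ++ v ++ u) := by
    intro u hu hul
    obtain ⟨v, hv, hg⟩ := hsp w hw u hu
    refine ⟨v, hv, hg, ?_⟩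
    have hφu := neg_mul_le_phiSup hS hC (φ := φ) hu
    rw [hul] at hφu
    linarith [phiSup_add_phiSup_le hS hC hV hv hg]
  obtain ⟨v₀, hv₀, hg₀, hφ₀⟩ := hext u₀ hu₀ rfl
  obtain ⟨v₁, hv₁, hg₁, hφ₁⟩ := hext u₁ hu₁ hlen.symm
  have hpre : ∀ v u : List ℕ, w <+: w ++ v ++ u := fun v u =>
    (List.prefix_append _ _).trans (List.prefix_append _ _)
  by_cases h₀ : w ++ v₀ ++ u₀ = z
  · refine ⟨w ++ v₁ ++ u₁, hg₁, by simp [hv₁, hlen], hpre _ _, fun h₁ => hne ?_, hφ₁⟩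
    exact (List.append_inj' (h₀.trans h₁.symm) hlen).2
  · exact ⟨w ++ v₀ ++ u₀, hg₀, by simp [hv₀], hpre _ _, h₀, hφ₀⟩

theorem exists_cylinderSum_initSeg_decay (hS : IsSubshift p S) (hC : ∀ z ∈ S, |φ z| ≤ C)
    (hV : BowenWith S φ V) (hsp : HasGapSpec S τ) {x : ℕ → ℕ} (hx : x ∈ S) {u₀ u₁ : List ℕ}
    (hu₀ : u₀ ∈ lang S) (hu₁ : u₁ ∈ lang S) (hlen : u₀.length = u₁.length) (hne : u₀ ≠ u₁) :
    ∃ ρ > 0, ∀ j L : ℕ, j + (τ + u₀.length) + τ ≤ L →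
      cylinderSum S φ L (initSeg x (j + (τ + u₀.length))) ≤
        Real.exp (-ρ) * cylinderSum S φ L (initSeg x j) := by
  set c := τ + u₀.length
  set P := pressure S φ (lang S)
  set R := 2 * V + τ * C
  set ρ := Real.exp (-(u₀.length * C + 3 * R + (c + 2 * τ) * P))
  refine ⟨ρ, Real.exp_pos _, fun j L hL => ?_⟩
  obtain ⟨r, rfl⟩ := Nat.exists_eq_add_of_le hL
  obtain ⟨g, hg, hglen, hwg, hgne, hφg⟩ := exists_ne_extension hS hC hV hsp hu₀ hu₁ hlen hne
    (initSeg_mem_lang hx j) (initSeg x (j + c))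
  rw [length_initSeg] at hglen
  set Z := cylinderSum S φ (j + c + τ + r) (initSeg x j)
  have hupper : Z ≤ Real.exp (phiSup S φ (initSeg x j) + ((c + τ + r + τ : ℕ) * P + R)) := by
    have h := cylinderSum_le_exp_pressure hS hC hV hsp (initSeg x j) (c + τ + r)
    rwa [length_initSeg, ← add_assoc, ← add_assoc] at h
  have hlower := hglen ▸ exp_pressure_le_cylinderSum hS hC hV hsp hg r
  have hρZ : ρ * Z ≤ cylinderSum S φ (j + c + τ + r) g := by
    refine (mul_le_mul_of_nonneg_left hupper (Real.exp_pos _).le).trans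
      (le_trans ?_ hlower)
    rw [← Real.exp_add, Real.exp_le_exp]
    push_cast
    linarith
  have hsplit := cylinderSum_add_le (S := S) (φ := φ) (j + c + τ + r)
    (initSeg_prefix_initSeg x (j.le_add_right c)) hwg (by rw [length_initSeg, hglen]) hgne.symm
  calc cylinderSum S φ (j + c + τ + r) (initSeg x (j + c)) ≤ (1 - ρ) * Z := by linarith
    _ ≤ Real.exp (-ρ) * Z :=
      mul_le_mul_of_nonneg_right (by linarith [Real.add_one_le_exp (-ρ)]) (cylinderSum_nonneg _ _)

theorem cylinderSum_initSeg_mul_le (hS : IsSubshift p S) {x : ℕ → ℕ} {c L : ℕ} {ρ : ℝ}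
    (hstep : ∀ j, j + c + τ ≤ L →
      cylinderSum S φ L (initSeg x (j + c)) ≤ Real.exp (-ρ) * cylinderSum S φ L (initSeg x j)) :
    ∀ k, k * c + τ ≤ L →
      cylinderSum S φ L (initSeg x (k * c)) ≤ Real.exp (-(ρ * k)) * Lam S φ (lang S) L
  | 0, _ => by simpa using hS.cylinderSum_le_Lam L _
  | k + 1, hk => by
    rw [Nat.succ_mul] at hk ⊢
    calc cylinderSum S φ L (initSeg x (k * c + c))
        ≤ Real.exp (-ρ) * cylinderSum S φ L (initSeg x (k * c)) := hstep (k * c) hk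
      _ ≤ Real.exp (-ρ) * (Real.exp (-(ρ * k)) * Lam S φ (lang S) L) :=
        mul_le_mul_of_nonneg_left (cylinderSum_initSeg_mul_le hS hstep k (by omega))
          (Real.exp_pos _).le
      _ = Real.exp (-(ρ * ↑(k + 1))) * Lam S φ (lang S) L := by
        rw [← mul_assoc, ← Real.exp_add]
        push_cast
        ring_nf

theorem phiSup_initSeg_le (hS : IsSubshift p S) (hC : ∀ z ∈ S, |φ z| ≤ C)
    (hV : BowenWith S φ V) (hsp : HasGapSpec S τ) {x : ℕ → ℕ} (hx : x ∈ S) {c : ℕ} (hc : 0 < c)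
    {ρ : ℝ} (hρ : 0 ≤ ρ)
    (hstep : ∀ j L : ℕ, j + c + τ ≤ L →
      cylinderSum S φ L (initSeg x (j + c)) ≤ Real.exp (-ρ) * cylinderSum S φ L (initSeg x j))
    (n : ℕ) :
    phiSup S φ (initSeg x n) ≤ n * (pressure S φ (lang S) - ρ / c) +
      (2 * (2 * V + τ * C) + 2 * τ * pressure S φ (lang S) + ρ) := by
  set K := n / c
  have hKc : K * c ≤ n := Nat.div_mul_le_self n c
  have hlower := le_cylinderSum hS hC hV hsp (initSeg_mem_lang hx n) 0
  rw [length_initSeg, add_zero, hS.Lam_lang_zero, mul_one] at hlower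
  have hupper := (cylinderSum_anti (n + τ) (initSeg_prefix_initSeg x hKc)).trans
    (cylinderSum_initSeg_mul_le hS (fun j => hstep j (n + τ)) K (by omega))
  have h := (hlower.trans hupper).trans
    (mul_le_mul_of_nonneg_left (Lam_le_exp_pressure hS hC hV hsp (n + τ)) (Real.exp_pos _).le)
  rw [← Real.exp_add, Real.exp_le_exp] at h
  have hnK : (n : ℝ) ≤ (K + 1) * c := by
    exact_mod_cast (Nat.lt_div_mul_add hc).le.trans_eq (by ring)
  have hρK : n * (ρ / c) ≤ ρ * K + ρ :=
    calc n * (ρ / c) ≤ (K + 1) * c * (ρ / c) := mul_le_mul_of_nonneg_right hnK (by positivity)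
      _ = ρ * K + ρ := by field_simp
  push_cast at h
  linarith

end Decay

/-- **Corollary.** Let `Σ` be a subshift of `{0,…,p}^ℕ` with at least two points
whose language has specification, and let `φ` be continuous on `Σ` with the
Bowen property. Then `P(φ, 𝒟) < P(φ, 𝓛)` for every `x ∈ Σ`, where `𝒟` is the
set of initial segments of `x`. -/
theorem pressure_initialSegs_lt (p : ℕ) (S : Set (ℕ → ℕ)) (hS : IsSubshift p S)
    (htwo : ∃ x ∈ S, ∃ y ∈ S, x ≠ y) (hspec : HasSpec S)
    (φ : (ℕ → ℕ) → ℝ) (hcont : ContinuousOn φ S) (hφ : Bowen S φ)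
    (x : ℕ → ℕ) (hx : x ∈ S) :
    pressure S φ (initialSegs x) < pressure S φ (lang S) := by
  obtain ⟨C, hC⟩ := hS.exists_abs_le hcont
  obtain ⟨V, -, hV⟩ := hφ
  obtain ⟨τ, hτ, hsp⟩ := hspec.exists_hasGapSpec
  obtain ⟨x₀, hx₀, y₀, hy₀, hxy⟩ := htwo
  obtain ⟨u₀, hu₀, u₁, hu₁, hlen, hne⟩ := exists_words_ne_of_ne hx₀ hy₀ hxy
  obtain ⟨ρ, hρ, hstep⟩ := exists_cylinderSum_initSeg_decay hS hC hV hsp hx hu₀ hu₁ hlen hne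
  have hc : 0 < τ + u₀.length := by omega
  have hbdd : BddBelow (Set.range fun n : ℕ => phiSup S φ (initSeg x n) / n) :=
    bddBelow_range_div_of_mul_le (neg_nonpos.2 (hS.nonneg_of_abs_le hC)) fun n => by
      simpa [mul_comm] using neg_mul_le_phiSup hS hC (initSeg_mem_lang hx n)
  rw [pressure_initialSegs]
  calc _ ≤ pressure S φ (lang S) - ρ / ↑(τ + u₀.length) :=
        limsup_div_le_of_le_mul_add hbdd (phiSup_initSeg_le hS hC hV hsp hx hc hρ.le hstep)
    _ < pressure S φ (lang S) := sub_lt_self _ (by positivity)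

end Subshift
end
end

section
/- Fix reals α, β with 0 ≤ α < 1 and β > 2, suppose D(a) is bounded, and let L be an upper bound for D(a). Then for every K > L and every word w in the language 𝓛 of Σ with k₂(w) = K, one has k₁(w) = k₁((b_1,…,b_K)); that is, the only vertex of the Hofbauer-type graph with second coordinate K is the vertex reached by the word (b_1,…,b_K). -/
/-! A tail of `w` agreeing with `a_1 … a_k` for some `k > K` would contain the tail `b_1 … b_K`
of `w`, putting `K` into `𝖣(a)`, which is impossible for `K > L`. Hence every tail of `w` agreeing
with a prefix of `a` is a tail of `b_1 … b_K`, and `k₁(w) = k₁(b_1 … b_K)`. -/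

noncomputable section

namespace IntermediateBeta

lemma pre_length (s : ℕ → ℕ) (n : ℕ) : (pre s n).length = n := by
  simp [pre]

lemma getElem_pre (s : ℕ → ℕ) {n i : ℕ} (hi : i < (pre s n).length) : (pre s n)[i] = s i := by
  simp [pre]

lemma tailAgrees_iff_pre_isSuffix (s : ℕ → ℕ) (w : List ℕ) (k : ℕ) :
    tailAgrees s w k ↔ pre s k <:+ w := by
  simp only [List.suffix_iff_getElem, pre_length, getElem_pre, tailAgrees]
  have hget (hk : k ≤ w.length) (i : ℕ) (hi : i < k) :
      w.getD (w.length - k + i) 0 = w[i + w.length - k] := by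
    rw [List.getD_eq_getElem _ _ (by omega)]
    congr 1
    omega
  exact ⟨fun ⟨hk, h⟩ => ⟨hk, fun i hi => (hget hk i hi).symm.trans (h i hi)⟩,
    fun ⟨hk, h⟩ => ⟨hk, fun i hi => (hget hk i hi).trans (h i hi)⟩⟩

lemma mem_D_of_pre_isSuffix_pre {s t : ℕ → ℕ} {n m : ℕ} (h : pre t n <:+ pre s m) :
    n ∈ D s t := by
  refine ⟨m - n, fun i hi => ?_⟩
  have := h.getElem (i := i) (by simpa [pre_length] using hi)
  simpa [getElem_pre, pre_length] using this

lemma kmax_eq_sSup_pre_isSuffix (s : ℕ → ℕ) (w : List ℕ) :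
    kmax s w = sSup {k | pre s k <:+ w} :=
  congrArg sSup (Set.ext (tailAgrees_iff_pre_isSuffix s w))

lemma pre_kmax_isSuffix (s : ℕ → ℕ) (w : List ℕ) : pre s (kmax s w) <:+ w := by
  have hne : {k | pre s k <:+ w}.Nonempty := ⟨0, by simp [pre]⟩
  have hbdd : BddAbove {k | pre s k <:+ w} :=
    ⟨w.length, fun k hk => by simpa [pre_length] using hk.length_le⟩
  rw [kmax_eq_sSup_pre_isSuffix]
  exact Nat.sSup_mem hne hbdd

lemma kmax_eq_kmax_pre_of_pre_isSuffix {s t : ℕ → ℕ} {K : ℕ} {w : List ℕ}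
    (hw : pre t K <:+ w) (hK : K ∉ D s t) : kmax s w = kmax s (pre t K) := by
  simp only [kmax_eq_sSup_pre_isSuffix]
  congr 1
  ext k
  refine ⟨fun hk => ?_, fun hk => hk.trans hw⟩
  have hkK : k ≤ K := by
    by_contra! hlt
    exact hK (mem_D_of_pre_isSuffix_pre
      (List.suffix_of_suffix_length_le hw hk (by simp [pre_length, hlt.le])))
  exact List.suffix_of_suffix_length_le hk hw (by simp [pre_length, hkK])

theorem unique_vertex_with_large_second_coord_general (α β : ℝ)
    (b : ℕ → ℕ)
    (L : ℕ) (hL : ∀ n ∈ D (Om α β 0) b, n ≤ L)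
    (K : ℕ) (hK : L < K) (w : List ℕ)
    (hk2 : kmax b w = K) :
    kmax (Om α β 0) w = kmax (Om α β 0) (pre b K) :=
  kmax_eq_kmax_pre_of_pre_isSuffix (hk2 ▸ pre_kmax_isSuffix b w)
    fun hD => (hL K hD).not_gt hK

/-- **Unique vertex with large second coordinate.** For `0 ≤ α < 1` and `β > 2`,
with `L` an upper bound for `𝖣(a)`: for every `K > L` and every `w ∈ 𝓛` with
`k₂(w) = K` one has `k₁(w) = k₁(b_1…b_K)`, i.e. the only vertex of the
Hofbauer-type graph with second coordinate `K` is the one reached by `b_1…b_K`. -/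
theorem unique_vertex_with_large_second_coord (α β : ℝ) (hα0 : 0 ≤ α)
    (hα1 : α < 1) (hβ : 2 < β)
    (b : ℕ → ℕ) (hb : b ∈ Sig α β) (hbsup : ∀ y ∈ Sig α β, lexLe y b)
    (L : ℕ) (hL : ∀ n ∈ D (Om α β 0) b, n ≤ L)
    (K : ℕ) (hK : L < K) (w : List ℕ) (hw : inLang α β w)
    (hk2 : kmax b w = K) :
    kmax (Om α β 0) w = kmax (Om α β 0) (pre b K) :=
  unique_vertex_with_large_second_coord_general α β b L hL K hK w hk2

end IntermediateBeta
end
end
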